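/- arXiv:1201.0078 — 6 statements merged into one kernel-verified Lean document; each statement's English description precedes it below -/
import Mathlib

section
/- Let 𝔄 and 𝔅 be real symmetric positive definite 2×2 matrices, and suppose E is a real symmetric 2×2 matrix satisfying E𝔅E = 𝔄 and such that 𝔅E is diagonalizable with positive eigenvalues. Then E is positive definite. -/
/-!
Write `G * Q = P * D * P⁻¹` with `D = diagonal d`. Then `Pᴴ * Q * P = M * D` for the positive
definite matrix `M = Pᴴ * G⁻¹ * P`. The left side is Hermitian, so `M` commutes with `D`, hence
with `√D`, and `M * D = √D * M * √D` is positive definite. Positive definiteness is invariant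
under congruence by the invertible `P`, so `Q` is positive definite.
-/

open Matrix

namespace Matrix

variable {n : Type*} [Fintype n] [DecidableEq n]

theorem mul_diagonal_eq_sqrt_conj_of_commute {M : Matrix n n ℝ} {d : n → ℝ}
    (hd : ∀ i, 0 ≤ d i) (hcomm : M * diagonal d = diagonal d * M) :
    M * diagonal d = diagonal (fun i ↦ √(d i)) * M * diagonal (fun i ↦ √(d i)) := by
  ext i j
  have hij : M i j * d j = d i * M i j := by
    simpa using congrFun (congrFun hcomm i) j
  -- `M i j ≠ 0` forces `d i = d j`
  have hsqrt : M i j * √(d j) = √(d i) * M i j := by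
    rcases eq_or_ne (M i j) 0 with h | h
    · simp [h]
    · have : d j = d i := mul_left_cancel₀ h (by linarith)
      rw [this, mul_comm]
  simp only [mul_diagonal, diagonal_mul]
  rw [← hsqrt, mul_assoc, Real.mul_self_sqrt (hd j)]

theorem PosDef.mul_diagonal_of_commute {M : Matrix n n ℝ} {d : n → ℝ} (hM : M.PosDef)
    (hd : ∀ i, 0 < d i) (hcomm : M * diagonal d = diagonal d * M) :
    (M * diagonal d).PosDef := by
  have hunit : IsUnit (diagonal fun i ↦ √(d i)) :=
    isUnit_diagonal.mpr (Pi.isUnit_iff.mpr fun i ↦ (Real.sqrt_pos.mpr (hd i)).ne'.isUnit)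
  rw [mul_diagonal_eq_sqrt_conj_of_commute (fun i ↦ (hd i).le) hcomm]
  simpa [star_eq_conjTranspose, diagonal_conjTranspose] using
    hunit.posDef_star_left_conjugate_iff.mpr hM

theorem posDef_of_posDef_mul_eq_conj_diagonal {G Q P : Matrix n n ℝ} {d : n → ℝ}
    (hG : G.PosDef) (hQ : Q.IsHermitian) (hP : IsUnit P) (hd : ∀ i, 0 < d i)
    (h : G * Q = P * diagonal d * P⁻¹) : Q.PosDef := by
  set M := Pᴴ * G⁻¹ * P
  have hM : M.PosDef := hG.inv.conjTranspose_mul_mul_same (mulVec_injective_of_isUnit hP)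
  have hQP : Pᴴ * Q * P = M * diagonal d := by
    have hGQP : G * Q * P = P * diagonal d := by
      rw [h, Matrix.mul_assoc, nonsing_inv_mul _ ((isUnit_iff_isUnit_det P).mp hP), Matrix.mul_one]
    have hQP : Q * P = G⁻¹ * P * diagonal d := by
      rw [Matrix.mul_assoc, ← hGQP, ← Matrix.mul_assoc, ← Matrix.mul_assoc,
        nonsing_inv_mul _ ((isUnit_iff_isUnit_det G).mp hG.isUnit), Matrix.one_mul]
    simp only [M, Matrix.mul_assoc, hQP]
  have hcomm : M * diagonal d = diagonal d * M := by
    have := congrArg conjTranspose hQP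
    rw [(isHermitian_conjTranspose_mul_mul P hQ).eq, conjTranspose_mul, hM.isHermitian.eq,
      diagonal_conjTranspose, star_trivial] at this
    exact hQP.symm.trans this
  rw [← hP.posDef_star_left_conjugate_iff, star_eq_conjTranspose, hQP]
  exact hM.mul_diagonal_of_commute hd hcomm

end Matrix

theorem stmt_4_general (B E : Matrix (Fin 2) (Fin 2) ℝ)
    (hBpd : B.PosDef)
    (hE : E.IsSymm)
    (hdiag : ∃ (P : Matrix (Fin 2) (Fin 2) ℝ) (d : Fin 2 → ℝ),
      IsUnit P.det ∧ (∀ i, 0 < d i) ∧ B * E = P * Matrix.diagonal d * P⁻¹) :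
    E.PosDef := by
  obtain ⟨P, d, hP, hd, hBE⟩ := hdiag
  exact posDef_of_posDef_mul_eq_conj_diagonal hBpd (isHermitian_iff_isSymm.mpr hE)
    ((isUnit_iff_isUnit_det P).mpr hP) hd hBE

theorem stmt_4 (A B E : Matrix (Fin 2) (Fin 2) ℝ)
    (hA : A.IsSymm) (hB : B.IsSymm) (hApd : A.PosDef) (hBpd : B.PosDef)
    (hE : E.IsSymm) (hEBE : E * B * E = A)
    (hdiag : ∃ (P : Matrix (Fin 2) (Fin 2) ℝ) (d : Fin 2 → ℝ),
      IsUnit P.det ∧ (∀ i, 0 < d i) ∧ B * E = P * Matrix.diagonal d * P⁻¹) :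
    E.PosDef :=
  stmt_4_general B E hBpd hE hdiag
end

section
/- For b ∈ (0,1), the functions y₁(x) = (b + x)((1−x)/(1+x))^{b/2} and y₂(x) = (b − x)((1+x)/(1−x))^{b/2} are solutions on (−1, 1) of the second-order linear ODE (1 − x²) y'' − 2x y' + (2 − b²/(1 − x²)) y = 0. -/
/-!
Write `y₁ = (b + x) g` with `g = ((1 - x)/(1 + x))^{b/2}`. Then `g' = -b g / (1 - x²)`, so every
derivative of `y₁` is `g` times a rational function of `x`, and the equation reduces to a rational
identity. The operator commutes with the reflection `x ↦ -x`, which maps `y₁` to `y₂`.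
-/

open Set

/-- The associated Legendre operator of degree `1` and order `b`. -/
noncomputable def legendreOp (b : ℝ) (y : ℝ → ℝ) (x : ℝ) : ℝ :=
  (1 - x ^ 2) * deriv (deriv y) x - 2 * x * deriv y x + (2 - b ^ 2 / (1 - x ^ 2)) * y x

lemma legendreOp_comp_neg (b : ℝ) (y : ℝ → ℝ) (x : ℝ) :
    legendreOp b (fun t => y (-t)) x = legendreOp b y (-x) := by
  have hy' : deriv (fun t => y (-t)) = fun t => -deriv y (-t) := funext (deriv_comp_neg y)
  simp only [legendreOp, hy', deriv.fun_neg, deriv_comp_neg (deriv y), neg_neg]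
  ring

lemma one_sub_sq_pos {x : ℝ} (hx : x ∈ Ioo (-1 : ℝ) 1) : 0 < 1 - x ^ 2 := by
  nlinarith [hx.1, hx.2]

lemma hasDerivAt_div_rpow (c : ℝ) {x : ℝ} (hx : x ∈ Ioo (-1 : ℝ) 1) :
    HasDerivAt (fun t => ((1 - t) / (1 + t)) ^ c)
      (-(2 * c / (1 - x ^ 2)) * ((1 - x) / (1 + x)) ^ c) x := by
  have h1 : 0 < 1 - x := by linarith [hx.2]
  have h2 : 0 < 1 + x := by linarith [hx.1]
  have hq : HasDerivAt (fun t => (1 - t) / (1 + t))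
      ((-1 * (1 + x) - (1 - x) * 1) / (1 + x) ^ 2) x :=
    ((hasDerivAt_id x).const_sub 1).div ((hasDerivAt_id x).const_add 1) h2.ne'
  have hne : (1 - x) / (1 + x) ≠ 0 := (div_pos h1 h2).ne'
  convert hq.rpow_const (p := c) (Or.inl hne) using 1
  rw [Real.rpow_sub_one hne]
  have : 1 - x ^ 2 ≠ 0 := (one_sub_sq_pos hx).ne'
  field_simp
  ring

section FirstOrderFactor

variable {b : ℝ} {g : ℝ → ℝ}
  (hg : ∀ x ∈ Ioo (-1 : ℝ) 1, HasDerivAt g (-(b / (1 - x ^ 2)) * g x) x)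
include hg

lemma hasDerivAt_linear_mul {x : ℝ} (hx : x ∈ Ioo (-1 : ℝ) 1) :
    HasDerivAt (fun t => (b + t) * g t) (g x * (1 - b * (b + x) / (1 - x ^ 2))) x := by
  refine (((hasDerivAt_id x).const_add b).fun_mul (hg x hx)).congr_deriv ?_
  have : 1 - x ^ 2 ≠ 0 := (one_sub_sq_pos hx).ne'
  field_simp
  simp only [id]
  ring

lemma legendreOp_linear_mul_eq_zero {x : ℝ} (hx : x ∈ Ioo (-1 : ℝ) 1) :
    legendreOp b (fun t => (b + t) * g t) x = 0 := by
  have hw : 1 - x ^ 2 ≠ 0 := (one_sub_sq_pos hx).ne'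
  have hderiv : deriv (fun t => (b + t) * g t) =ᶠ[nhds x]
      fun t => g t * (1 - b * (b + t) / (1 - t ^ 2)) :=
    Filter.eventually_of_mem (isOpen_Ioo.mem_nhds hx) fun t ht =>
      (hasDerivAt_linear_mul hg ht).deriv
  have hrat : HasDerivAt (fun t => 1 - b * (b + t) / (1 - t ^ 2))
      (-((b * 1 * (1 - x ^ 2) - b * (b + x) * -(2 * x)) / (1 - x ^ 2) ^ 2)) x :=
    ((((hasDerivAt_id x).const_add b).const_mul b).div
      ((hasDerivAt_pow 2 x).const_sub 1) hw).const_sub 1 |>.congr_deriv (by simp)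
  rw [legendreOp, hderiv.deriv_eq, ((hg x hx).fun_mul hrat).deriv,
    (hasDerivAt_linear_mul hg hx).deriv]
  field_simp
  ring

end FirstOrderFactor

theorem stmt_9_general (b : ℝ)
    (y1 y2 : ℝ → ℝ)
    (hy1 : ∀ x, y1 x = (b + x) * ((1 - x) / (1 + x)) ^ (b / 2))
    (hy2 : ∀ x, y2 x = (b - x) * ((1 + x) / (1 - x)) ^ (b / 2)) :
    ∀ x ∈ Set.Ioo (-1 : ℝ) 1,
      ((1 - x ^ 2) * deriv (deriv y1) x - 2 * x * deriv y1 x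
        + (2 - b ^ 2 / (1 - x ^ 2)) * y1 x = 0) ∧
      ((1 - x ^ 2) * deriv (deriv y2) x - 2 * x * deriv y2 x
        + (2 - b ^ 2 / (1 - x ^ 2)) * y2 x = 0) := by
  have hy1_sol : ∀ x ∈ Ioo (-1 : ℝ) 1, legendreOp b y1 x = 0 := by
    rw [funext hy1]
    refine fun x hx => legendreOp_linear_mul_eq_zero (fun t ht => ?_) hx
    convert hasDerivAt_div_rpow (b / 2) ht using 2
    ring
  have hy2_refl : y2 = fun t => y1 (-t) := by
    funext t
    rw [hy2, hy1, sub_neg_eq_add, ← sub_eq_add_neg, ← sub_eq_add_neg]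
  intro x hx
  have hnegx : -x ∈ Ioo (-1 : ℝ) 1 := ⟨by linarith [hx.2], by linarith [hx.1]⟩
  refine ⟨hy1_sol x hx, ?_⟩
  rw [hy2_refl]
  exact (legendreOp_comp_neg b y1 x).trans (hy1_sol (-x) hnegx)

theorem stmt_9 (b : ℝ) (hb : b ∈ Set.Ioo (0 : ℝ) 1)
    (y1 y2 : ℝ → ℝ)
    (hy1 : ∀ x, y1 x = (b + x) * ((1 - x) / (1 + x)) ^ (b / 2))
    (hy2 : ∀ x, y2 x = (b - x) * ((1 + x) / (1 - x)) ^ (b / 2)) :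
    ∀ x ∈ Set.Ioo (-1 : ℝ) 1,
      ((1 - x ^ 2) * deriv (deriv y1) x - 2 * x * deriv y1 x
        + (2 - b ^ 2 / (1 - x ^ 2)) * y1 x = 0) ∧
      ((1 - x ^ 2) * deriv (deriv y2) x - 2 * x * deriv y2 x
        + (2 - b ^ 2 / (1 - x ^ 2)) * y2 x = 0) :=
  stmt_9_general b y1 y2 hy1 hy2
end

section
/- Let λ₂ > λ₁ > 0. The function Tᵘ(q₁) = (−(16λ₂² + 16λ₁λ₂)(q₁² + 4) + 32λ₁²q₁²) / ((q₁² + 4)²((λ₁ − λ₂)q₁² − 4λ₁ − 4λ₂)) is a solution on [0, ∞) of the Riccati equation λ₁ q₁ (Tᵘ)' + (1/16)(4 + q₁²)² (Tᵘ)² = (16/(4 + q₁²)²)(λ₂² − 4λ₁²q₁²/(4 + q₁²)), with Tᵘ(0) = λ₂. -/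
/-!
`Tᵘ = N / D` is a rational function whose denominator
`D = (q² + 4)² ((λ₁ - λ₂) q² - 4λ₁ - 4λ₂)` has no real zero, so `(Tᵘ)' = (N' D - N D') / D²`
everywhere, and after multiplying by `D²` the Riccati equation is a polynomial identity.
-/

namespace NeumannRiccati

def tuNum (l1 l2 q : ℝ) : ℝ :=
  -(16 * l2 ^ 2 + 16 * l1 * l2) * (q ^ 2 + 4) + 32 * l1 ^ 2 * q ^ 2

def tuDen (l1 l2 q : ℝ) : ℝ :=
  (q ^ 2 + 4) ^ 2 * ((l1 - l2) * q ^ 2 - 4 * l1 - 4 * l2)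

variable {l1 l2 : ℝ}

lemma sub_mul_sq_sub_neg (h12 : l1 ≤ l2) (hsum : 0 < l1 + l2) (q : ℝ) :
    (l1 - l2) * q ^ 2 - 4 * l1 - 4 * l2 < 0 := by
  nlinarith [sq_nonneg q]

lemma tuDen_ne_zero (h12 : l1 ≤ l2) (hsum : 0 < l1 + l2) (q : ℝ) : tuDen l1 l2 q ≠ 0 :=
  mul_ne_zero (by positivity) (sub_mul_sq_sub_neg h12 hsum q).ne

lemma tuNum_zero_div_tuDen_zero (hsum : l1 + l2 ≠ 0) : tuNum l1 l2 0 / tuDen l1 l2 0 = l2 := by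
  have hN : tuNum l1 l2 0 = -64 * (l1 + l2) * l2 := by unfold tuNum; ring
  have hD : tuDen l1 l2 0 = -64 * (l1 + l2) := by unfold tuDen; ring
  rw [hN, hD, mul_div_cancel_left₀ _ (mul_ne_zero (by norm_num) hsum)]

lemma hasDerivAt_tuNum (q : ℝ) :
    HasDerivAt (tuNum l1 l2) (2 * q * (32 * l1 ^ 2 - 16 * l2 ^ 2 - 16 * l1 * l2)) q := by
  have hsq : HasDerivAt (fun x : ℝ => x ^ 2) (2 * q) q := by simpa using hasDerivAt_pow 2 q
  exact (((hsq.add_const 4).const_mul _).add (hsq.const_mul _)).congr_deriv (by ring)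

lemma hasDerivAt_tuDen (q : ℝ) :
    HasDerivAt (tuDen l1 l2)
      (2 * q * (q ^ 2 + 4) * (2 * ((l1 - l2) * q ^ 2 - 4 * l1 - 4 * l2)
        + (l1 - l2) * (q ^ 2 + 4))) q := by
  have hsq : HasDerivAt (fun x : ℝ => x ^ 2) (2 * q) q := by simpa using hasDerivAt_pow 2 q
  exact (((hsq.add_const 4).fun_pow 2).mul
    (((hsq.const_mul (l1 - l2)).sub_const (4 * l1)).sub_const (4 * l2))).congr_deriv (by ring)

lemma riccati_tuNum_div_tuDen (q : ℝ) (hL : (l1 - l2) * q ^ 2 - 4 * l1 - 4 * l2 ≠ 0) :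
    l1 * q * ((2 * q * (32 * l1 ^ 2 - 16 * l2 ^ 2 - 16 * l1 * l2) * tuDen l1 l2 q
        - tuNum l1 l2 q * (2 * q * (q ^ 2 + 4) * (2 * ((l1 - l2) * q ^ 2 - 4 * l1 - 4 * l2)
          + (l1 - l2) * (q ^ 2 + 4)))) / tuDen l1 l2 q ^ 2)
      + (1 / 16) * (4 + q ^ 2) ^ 2 * (tuNum l1 l2 q / tuDen l1 l2 q) ^ 2
      = (16 / (4 + q ^ 2) ^ 2) * (l2 ^ 2 - 4 * l1 ^ 2 * q ^ 2 / (4 + q ^ 2)) := by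
  have hs : 4 + q ^ 2 ≠ 0 := by positivity
  unfold tuNum tuDen
  rw [add_comm (q ^ 2) 4]
  generalize hLdef : (l1 - l2) * q ^ 2 - 4 * l1 - 4 * l2 = L at hL ⊢
  field_simp
  rw [← hLdef]
  ring

end NeumannRiccati

open NeumannRiccati in
theorem stmt_12 (l1 l2 : ℝ) (h1 : 0 < l1) (h12 : l1 < l2)
    (Tu : ℝ → ℝ)
    (hTu : ∀ q, Tu q = (-(16 * l2 ^ 2 + 16 * l1 * l2) * (q ^ 2 + 4) + 32 * l1 ^ 2 * q ^ 2)
      / ((q ^ 2 + 4) ^ 2 * ((l1 - l2) * q ^ 2 - 4 * l1 - 4 * l2))) :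
    Tu 0 = l2 ∧
      ∀ q ∈ Set.Ici (0 : ℝ),
        l1 * q * deriv Tu q + (1 / 16) * (4 + q ^ 2) ^ 2 * Tu q ^ 2
          = (16 / (4 + q ^ 2) ^ 2) * (l2 ^ 2 - 4 * l1 ^ 2 * q ^ 2 / (4 + q ^ 2)) := by
  have hsum : 0 < l1 + l2 := by linarith
  have hD := tuDen_ne_zero h12.le hsum
  have hTu' : Tu = tuNum l1 l2 / tuDen l1 l2 := funext hTu
  subst hTu'
  refine ⟨tuNum_zero_div_tuDen_zero hsum.ne', fun q _ => ?_⟩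
  rw [((hasDerivAt_tuNum q).div (hasDerivAt_tuDen q) (hD q)).deriv]
  exact riccati_tuNum_div_tuDen q (sub_mul_sq_sub_neg h12.le hsum q).ne
end

section
/- Let λ₂ > λ₁ > 0. Then the value at q₁ = 2 of the explicit Riccati solution Tᵘ from the Neumann problem satisfies Tᵘ(2) = (1/4)(λ₂ + λ₁ − λ₁²/λ₂) > λ₁/4. -/
noncomputable def riccatiT (l1 l2 q : ℝ) : ℝ :=
  (-(16 * l2 ^ 2 + 16 * l1 * l2) * (q ^ 2 + 4) + 32 * l1 ^ 2 * q ^ 2)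
    / ((q ^ 2 + 4) ^ 2 * ((l1 - l2) * q ^ 2 - 4 * l1 - 4 * l2))

theorem riccatiT_two (l1 l2 : ℝ) (hl2 : l2 ≠ 0) :
    riccatiT l1 l2 2 = (1 / 4) * (l2 + l1 - l1 ^ 2 / l2) := by
  have hden : ((2 : ℝ) ^ 2 + 4) ^ 2 * ((l1 - l2) * 2 ^ 2 - 4 * l1 - 4 * l2) = -512 * l2 := by
    ring
  rw [riccatiT, hden]
  field_simp
  ring

theorem sq_div_lt_of_abs_lt {a b : ℝ} (h : |a| < b) : a ^ 2 / b < b := by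
  have hb : 0 < b := (abs_nonneg a).trans_lt h
  rw [div_lt_iff₀ hb, ← sq]
  exact sq_lt_sq' (neg_lt_of_abs_lt h) (lt_of_abs_lt h)

theorem stmt_13 (l1 l2 : ℝ) (h1 : 0 < l1) (h12 : l1 < l2)
    (Tu : ℝ → ℝ)
    (hTu : ∀ q, Tu q = (-(16 * l2 ^ 2 + 16 * l1 * l2) * (q ^ 2 + 4) + 32 * l1 ^ 2 * q ^ 2)
      / ((q ^ 2 + 4) ^ 2 * ((l1 - l2) * q ^ 2 - 4 * l1 - 4 * l2))) :
    Tu 2 = (1 / 4) * (l2 + l1 - l1 ^ 2 / l2) ∧ l1 / 4 < Tu 2 := by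
  have hTu2 : Tu 2 = (1 / 4) * (l2 + l1 - l1 ^ 2 / l2) :=
    (hTu 2).trans (riccatiT_two l1 l2 (h1.trans h12).ne')
  have hsq : l1 ^ 2 / l2 < l2 := sq_div_lt_of_abs_lt ((abs_of_pos h1).trans_lt h12)
  refine ⟨hTu2, ?_⟩
  rw [hTu2]
  linarith
end

section
/- Let ψ̄, b̄ : (−∞, t₁] → ℝ be continuous with ψ̄(t) → ψ₀ > 0 as t → −∞. If Ū : (−∞, t₁] → ℝ is a differentiable solution of Ū' + ψ̄(t)Ū + b̄(t)Ū² = 0 with Ū(t) → 0 as t → −∞ and b̄(t)Ū(t) → 0 as t → −∞, then Ū ≡ 0. -/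
/-!
Write the equation as `U' = -(ψ + b U) U`. The coefficient `ψ + b U` tends to `ψ₀ > 0`
at `-∞`, so on some half-line `(-∞, T]` it is nonnegative and `U²` is nonincreasing there;
since `U² → 0` at `-∞`, this forces `U = 0` on `(-∞, T]`. On the compact interval `[T, t₁]`
the coefficient is continuous, hence bounded, and Grönwall's inequality propagates `U(T) = 0`
forward.
-/

open Filter Set Topology

theorem eq_zero_of_hasDerivWithinAt_smul_self {E : Type*} [NormedAddCommGroup E]
    [NormedSpace ℝ E] {a b : ℝ} {g : ℝ → ℝ} {f : ℝ → E}
    (hg : ContinuousOn g (Icc a b)) (hf : ContinuousOn f (Icc a b))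
    (hf' : ∀ x ∈ Ico a b, HasDerivWithinAt f (g x • f x) (Ici x) x)
    (ha : f a = 0) : ∀ x ∈ Icc a b, f x = 0 := by
  obtain ⟨C, hC⟩ := isCompact_Icc.exists_bound_of_continuousOn hg
  have hbound : ∀ x ∈ Ico a b, ‖g x • f x‖ ≤ C * ‖f x‖ := fun x hx => by
    rw [norm_smul]
    exact mul_le_mul_of_nonneg_right (hC x (Ico_subset_Icc_self hx)) (norm_nonneg _)
  exact eq_zero_of_abs_deriv_le_mul_abs_self_of_eq_zero_right hf hf' ha hbound

theorem eq_zero_of_hasDerivAt_neg_mul_self_of_tendsto_atBot {T : ℝ} {g f : ℝ → ℝ}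
    (hf : ∀ x ≤ T, HasDerivAt f (-(g x * f x)) x) (hg : ∀ x ≤ T, 0 ≤ g x)
    (hlim : Tendsto f atBot (𝓝 0)) : ∀ x ≤ T, f x = 0 := by
  have hanti : AntitoneOn (fun x => f x ^ 2) (Iic T) := by
    refine antitoneOn_of_hasDerivWithinAt_nonpos (convex_Iic T)
      (fun x hx => ((hf x hx).pow 2).continuousAt.continuousWithinAt)
      (fun x hx => ((hf x (interior_subset (s := Iic T) hx)).pow 2).hasDerivWithinAt)
      (fun x hx => ?_)
    have hx : x ≤ T := interior_subset (s := Iic T) hx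
    norm_num
    nlinarith [mul_nonneg (hg x hx) (sq_nonneg (f x))]
  intro x hx
  have hsq : f x ^ 2 ≤ 0 := ge_of_tendsto (by simpa using hlim.pow 2) <| by
    filter_upwards [eventually_le_atBot x] with s hs using hanti (hs.trans hx) hx hs
  exact pow_eq_zero_iff two_ne_zero |>.mp (le_antisymm hsq (sq_nonneg _))

theorem stmt_15 (t1 ψ0 : ℝ) (hψ0 : 0 < ψ0)
    (ψ b U : ℝ → ℝ)
    (hψc : ContinuousOn ψ (Set.Iic t1)) (hbc : ContinuousOn b (Set.Iic t1))
    (hψlim : Filter.Tendsto ψ Filter.atBot (nhds ψ0))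
    (hU : ∀ t ≤ t1, HasDerivAt U (-(ψ t * U t + b t * U t ^ 2)) t)
    (hUlim : Filter.Tendsto U Filter.atBot (nhds 0))
    (hbUlim : Filter.Tendsto (fun t => b t * U t) Filter.atBot (nhds 0)) :
    ∀ t ≤ t1, U t = 0 := by
  have hcoef : ∀ᶠ t in atBot, 0 < ψ t + b t * U t :=
    (hψlim.add hbUlim).eventually (eventually_gt_nhds (by simpa using hψ0))
  obtain ⟨a, ha⟩ := eventually_atBot.mp hcoef
  have hU' : ∀ t ≤ t1, HasDerivAt U (-((ψ t + b t * U t) * U t)) t := fun t ht => by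
    convert hU t ht using 2; ring
  have hzero : ∀ t ≤ min a t1, U t = 0 :=
    eq_zero_of_hasDerivAt_neg_mul_self_of_tendsto_atBot
      (fun t ht => hU' t (ht.trans (min_le_right _ _)))
      (fun t ht => (ha t (ht.trans (min_le_left _ _))).le) hUlim
  have hUc : ContinuousOn U (Iic t1) := fun t ht => (hU t ht).continuousAt.continuousWithinAt
  intro t ht
  rcases le_total t (min a t1) with h | h
  · exact hzero t h
  refine eq_zero_of_hasDerivWithinAt_smul_self (g := fun t => -(ψ t + b t * U t))
    ((hψc.add (hbc.mul hUc)).neg.mono Icc_subset_Iic_self) (hUc.mono Icc_subset_Iic_self)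
    (fun x hx => ?_) (hzero _ le_rfl) t ⟨h, ht⟩
  rw [smul_eq_mul, neg_mul]
  exact (hU' x hx.2.le).hasDerivWithinAt
end

section
/- Let H(q,p) = ½⟨B(q)p,p⟩ + V(q) with B(q) = B₀(q₁) + O(q₂²) (no linear term in q₂) and V(q) = V₀(q₁) + V₁(q₁)q₂ + O(q₂²), where B₀ = [[b₁₁₀, b₁₂₀],[b₁₂₀, b₂₂₀]] is positive definite. Suppose (q₁⁰(t), 0, p₁⁰(t), p₂⁰(t)) is a solution of the Hamiltonian equations with zero energy, with q₁⁰ increasing, and write p₁ = S₀'(q₁), p₂ = S₁(q₁) along it. Then: (a) q̇₁ = β(q₁)S₀'(q₁) with β = det B₀ / b₂₂₀; (b) S₀'(q₁) = √(−2V₀(q₁)/β(q₁)) and S₁(q₁) = −(b₁₂₀(q₁)/b₂₂₀(q₁)) S₀'(q₁); (c) S₁'(q₁) β(q₁) S₀'(q₁) = −V₁(q₁). -/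
theorem stmt_16 (b110 b120 b220 V0 V1 : ℝ → ℝ)
    (hpd : ∀ x, 0 < b110 x ∧ 0 < b220 x ∧ 0 < b110 x * b220 x - b120 x ^ 2)
    (β : ℝ → ℝ) (hβ : ∀ x, β x = (b110 x * b220 x - b120 x ^ 2) / b220 x)
    (q1 p1 p2 : ℝ → ℝ) (S0' S1 : ℝ → ℝ)
    (hq1mono : StrictMono q1)
    (hS1diff : Differentiable ℝ S1)
    (hq1 : ∀ t, HasDerivAt q1 (b110 (q1 t) * p1 t + b120 (q1 t) * p2 t) t)
    (hconstr : ∀ t, b120 (q1 t) * p1 t + b220 (q1 t) * p2 t = 0)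
    (hp2 : ∀ t, HasDerivAt p2 (-(V1 (q1 t))) t)
    (henergy : ∀ t, (1 / 2) * (b110 (q1 t) * p1 t ^ 2 + 2 * b120 (q1 t) * p1 t * p2 t
      + b220 (q1 t) * p2 t ^ 2) + V0 (q1 t) = 0)
    (hp1S : ∀ t, p1 t = S0' (q1 t)) (hp2S : ∀ t, p2 t = S1 (q1 t)) :
    (∀ t, HasDerivAt q1 (β (q1 t) * S0' (q1 t)) t) ∧
    (∀ t, S0' (q1 t) = Real.sqrt (-2 * V0 (q1 t) / β (q1 t)) ∧
      S1 (q1 t) = -(b120 (q1 t) / b220 (q1 t)) * S0' (q1 t)) ∧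
    (∀ t, deriv S1 (q1 t) * β (q1 t) * S0' (q1 t) = -V1 (q1 t)) := by
  have hb220 : ∀ x, b220 x ≠ 0 := fun x => (hpd x).2.1.ne'
  have hβpos : ∀ x, 0 < β x := by
    intro x; rw [hβ x]; exact div_pos (hpd x).2.2 (hpd x).2.1
  -- constraint gives p2 in terms of p1
  have hp2eq : ∀ t, p2 t = -(b120 (q1 t) / b220 (q1 t)) * p1 t := by
    intro t
    have h := hconstr t
    have hb := hb220 (q1 t)
    field_simp
    linarith
  -- part (a)
  have ha : ∀ t, HasDerivAt q1 (β (q1 t) * S0' (q1 t)) t := by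
    intro t
    have key : β (q1 t) * S0' (q1 t) = b110 (q1 t) * p1 t + b120 (q1 t) * p2 t := by
      rw [← hp1S t, hp2eq t, hβ (q1 t)]
      field_simp [hb220 (q1 t)]
      ring
    rw [key]; exact hq1 t
  -- p1 nonneg from monotonicity
  have hp1nonneg : ∀ t, 0 ≤ p1 t := by
    intro t
    have hd : 0 ≤ β (q1 t) * S0' (q1 t) := by
      have htend := hasDerivAt_iff_tendsto_slope.mp (ha t)
      refine ge_of_tendsto htend ?_
      refine eventually_nhdsWithin_of_forall (fun s hs => ?_)
      have hs' : s ≠ t := hs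
      rcases lt_or_gt_of_ne hs' with h | h
      · have h1 : q1 s ≤ q1 t := (hq1mono.le_iff_le).mpr h.le
        have hsl : slope q1 t s = (q1 s - q1 t) / (s - t) := by
          simp [slope, div_eq_inv_mul]
        rw [hsl]
        exact div_nonneg_iff.mpr (Or.inr ⟨by linarith, by linarith⟩)
      · have h1 : q1 t ≤ q1 s := (hq1mono.le_iff_le).mpr h.le
        have hsl : slope q1 t s = (q1 s - q1 t) / (s - t) := by
          simp [slope, div_eq_inv_mul]
        rw [hsl]
        exact div_nonneg (by linarith) (by linarith)
    rw [hp1S t]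
    by_contra hneg
    push_neg at hneg
    nlinarith [mul_pos (hβpos (q1 t)) (neg_pos.mpr hneg)]
  -- energy identity: β p1^2 = -2 V0
  have hen : ∀ t, β (q1 t) * p1 t ^ 2 = -2 * V0 (q1 t) := by
    intro t
    have h4 : (b110 (q1 t) * b220 (q1 t) - b120 (q1 t) ^ 2) * p1 t ^ 2
        = -2 * V0 (q1 t) * b220 (q1 t) := by
      linear_combination 2 * b220 (q1 t) * (henergy t)
        - (b120 (q1 t) * p1 t + b220 (q1 t) * p2 t) * (hconstr t)
    rw [hβ (q1 t)]
    have hb := hb220 (q1 t)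
    field_simp
    linarith [h4]
  have hb : ∀ t, S0' (q1 t) = Real.sqrt (-2 * V0 (q1 t) / β (q1 t)) ∧
      S1 (q1 t) = -(b120 (q1 t) / b220 (q1 t)) * S0' (q1 t) := by
    intro t
    constructor
    · have : -2 * V0 (q1 t) / β (q1 t) = p1 t ^ 2 := by
        rw [← hen t, mul_div_cancel_left₀ _ (hβpos (q1 t)).ne']
      rw [this, Real.sqrt_sq (hp1nonneg t), hp1S t]
    · rw [← hp1S t, ← hp2S t]; exact hp2eq t
  refine ⟨ha, hb, ?_⟩
  intro t
  have hcomp : HasDerivAt (S1 ∘ q1) (deriv S1 (q1 t) * (β (q1 t) * S0' (q1 t))) t :=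
    (hS1diff (q1 t)).hasDerivAt.comp t (ha t)
  have heq : S1 ∘ q1 = p2 := by
    funext s; exact (hp2S s).symm
  rw [heq] at hcomp
  have := hcomp.unique (hp2 t)
  linarith [this]
end
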